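/- (Non-associativity of Møller addition.) In E = EuclideanSpace ℝ (Fin 2) there exist vectors a, b, c with ‖a‖ < 1, ‖b‖ < 1, ‖c‖ < 1 such that (a ⊕ b) ⊕ c ≠ a ⊕ (b ⊕ c), where ⊕ is the Møller addition of velocities. -/

import Mathlib

open RealInnerProductSpace

/-- The Møller addition of velocities; `δ = √(1 - ‖v‖²)`. -/
noncomputable def moller (v u : EuclideanSpace ℝ (Fin 2)) : EuclideanSpace ℝ (Fin 2) :=
  (1 + ⟪v, u⟫)⁻¹ •
    ((1 + ⟪v, u⟫ / (1 + Real.sqrt (1 - ‖v‖ ^ 2))) • v + Real.sqrt (1 - ‖v‖ ^ 2) • u)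

/-!
Take `a = c = (3/5, 0)` and `b = (0, 3/5)`. Every vector met along the way has a rational
`δ = √(1 - ‖v‖²)` (it is `4/5` for `a` and `b`, and `16/25` for `a ⊕ b = (3/5, 12/25)`), so
both sides can be computed exactly: `(a ⊕ b) ⊕ c = (2859/3485, 300/697)` while
`a ⊕ (b ⊕ c) = (135/161, 60/161)`.
-/

lemma norm_sq_vec2 (x y : ℝ) : ‖!₂[x, y]‖ ^ 2 = x ^ 2 + y ^ 2 := by
  simp [EuclideanSpace.norm_sq_eq, Fin.sum_univ_two]

lemma inner_vec2 (x y z w : ℝ) : ⟪!₂[x, y], !₂[z, w]⟫ = x * z + y * w := by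
  simp only [PiLp.inner_apply, Fin.sum_univ_two, Matrix.cons_val_zero, Matrix.cons_val_one,
    Matrix.cons_val_fin_one, RCLike.inner_apply, Real.ringHom_apply]
  ring

lemma moller_of_norm_sq_add_sq {v : EuclideanSpace ℝ (Fin 2)} {δ : ℝ} (hδ : 0 ≤ δ)
    (hv : ‖v‖ ^ 2 + δ ^ 2 = 1) (u : EuclideanSpace ℝ (Fin 2)) :
    moller v u = (1 + ⟪v, u⟫)⁻¹ • ((1 + ⟪v, u⟫ / (1 + δ)) • v + δ • u) := by
  rw [moller, show 1 - ‖v‖ ^ 2 = δ ^ 2 by linarith, Real.sqrt_sq hδ]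

lemma moller_vec2 {x y δ : ℝ} (hδ : 0 ≤ δ) (hv : x ^ 2 + y ^ 2 + δ ^ 2 = 1) (z w : ℝ) :
    moller !₂[x, y] !₂[z, w] =
      let s := x * z + y * w
      !₂[(1 + s)⁻¹ * ((1 + s / (1 + δ)) * x + δ * z),
        (1 + s)⁻¹ * ((1 + s / (1 + δ)) * y + δ * w)] := by
  rw [moller_of_norm_sq_add_sq hδ (by rwa [norm_sq_vec2]), inner_vec2]
  ext i
  fin_cases i <;>
    simp only [PiLp.add_apply, PiLp.smul_apply, smul_eq_mul, Fin.zero_eta, Fin.mk_one,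
      Matrix.cons_val_zero, Matrix.cons_val_one, Matrix.cons_val_fin_one]

lemma norm_vec2_lt_one {x y : ℝ} (h : x ^ 2 + y ^ 2 < 1) : ‖!₂[x, y]‖ < 1 := by
  rwa [← sq_lt_one_iff₀ (norm_nonneg _), norm_sq_vec2]

/-- Non-associativity of the Møller addition. -/
theorem moller_not_associative :
    ∃ a b c : EuclideanSpace ℝ (Fin 2), ‖a‖ < 1 ∧ ‖b‖ < 1 ∧ ‖c‖ < 1 ∧
      moller (moller a b) c ≠ moller a (moller b c) := by
  refine ⟨!₂[3/5, 0], !₂[0, 3/5], !₂[3/5, 0], norm_vec2_lt_one (by norm_num),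
    norm_vec2_lt_one (by norm_num), norm_vec2_lt_one (by norm_num), ?_⟩
  have left : moller (moller !₂[3/5, 0] !₂[0, 3/5]) !₂[3/5, 0] = !₂[2859/3485, 300/697] := by
    rw [moller_vec2 (δ := 4/5) (by norm_num) (by norm_num),
      moller_vec2 (δ := 16/25) (by norm_num) (by norm_num)]
    norm_num
  have right : moller !₂[3/5, 0] (moller !₂[0, 3/5] !₂[3/5, 0]) = !₂[135/161, 60/161] := by
    rw [moller_vec2 (δ := 4/5) (by norm_num) (by norm_num),
      moller_vec2 (δ := 4/5) (by norm_num) (by norm_num)]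
    norm_num
  rw [left, right]
  intro h
  have second_coord := congrArg (· 1) h
  norm_num at second_coord
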